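/- (Lemma 6.2, bounded case.) If S is bounded, i.e. there exists B > 0 such that f vanishes almost everywhere on (B,∞), then the M/G/1 SRPT mean response time dominates the logarithm of 1/(1−ρ) in heavy traffic: lim_{λ → (1/m)⁻} ln(1/(1−λm)) / T̄(λ) = 0. -/

import Mathlib

open MeasureTheory Filter

/-- Relevant load `ρ_{≤x} = λ ∫₀^x t f(t) dt`. -/
noncomputable def rhoLe (f : ℝ → ℝ) (lam x : ℝ) : ℝ :=
  lam * ∫ t in (0:ℝ)..x, t * f t

/-- Tail of the service requirement distribution, `F̄(x) = ∫_x^∞ f(t) dt`. -/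
noncomputable def tailS (f : ℝ → ℝ) (x : ℝ) : ℝ :=
  ∫ t in Set.Ioi x, f t

/-- Schrage's exact formula `T̄_λ(x)` for the mean response time of a size-`x`
job in an M/G/1 queue under SRPT. -/
noncomputable def Tsrpt1 (f : ℝ → ℝ) (lam x : ℝ) : ℝ :=
  (lam * (∫ t in (0:ℝ)..x, t ^ 2 * f t) + lam * x ^ 2 * tailS f x)
      / (2 * (1 - rhoLe f lam x) ^ 2)
    + ∫ t in (0:ℝ)..x, 1 / (1 - rhoLe f lam t)

/-- Overall M/G/1 SRPT mean response time `T̄(λ) = ∫₀^∞ T̄_λ(x) f(x) dx`. -/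
noncomputable def TsrptMean (f : ℝ → ℝ) (lam : ℝ) : ℝ :=
  ∫ x in Set.Ioi (0:ℝ), Tsrpt1 f lam x * f x

/-!
Write `ε = 1 - λm`. By continuity of `x ↦ ρ_{≤x}` there is a size `a ≤ B` with
`ρ_{≤a} = 1 - 2ε`, so every job of size `x > a` sees `1 - ρ_{≤x} ≤ 2ε`. Jensen's inequality
`(∫₀^x t f)² ≤ ∫₀^x t² f` bounds the first term of Schrage's formula for such jobs below by
`ρ_{≤x}² / (2λ(1 - ρ_{≤x})²) ≥ 1 / (32λε²)`. Bounded support turns the tail moment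
`λ ∫_a^∞ t f = ε` into tail mass `F̄(a) ≥ ε / (λB)`, hence `T̄(λ) ≥ m² / (32Bε)`, and
`ε log(1/ε) → 0`.
-/

open Set

theorem sq_integral_mul_le_integral_sq_mul {α : Type*} [MeasurableSpace α] {μ : Measure α}
    {X w : α → ℝ} (hw : 0 ≤ᵐ[μ] w) (hw_mass : ∫ a, w a ∂μ ≤ 1) (hwi : Integrable w μ)
    (hXw : Integrable (fun a => X a * w a) μ) (hX2w : Integrable (fun a => X a ^ 2 * w a) μ) :
    (∫ a, X a * w a ∂μ) ^ 2 ≤ ∫ a, X a ^ 2 * w a ∂μ := by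
  set c := ∫ a, X a * w a ∂μ
  have hvar : 0 ≤ ∫ a, (X a - c) ^ 2 * w a ∂μ :=
    integral_nonneg_of_ae (hw.mono fun a ha => mul_nonneg (sq_nonneg _) ha)
  have hexpand : ∫ a, (X a - c) ^ 2 * w a ∂μ
      = ∫ a, X a ^ 2 * w a ∂μ - 2 * c * c + c ^ 2 * ∫ a, w a ∂μ := by
    have h : (fun a => (X a - c) ^ 2 * w a)
        = fun a => X a ^ 2 * w a - 2 * c * (X a * w a) + c ^ 2 * w a := by
      ext a; ring
    rw [h, integral_add, integral_sub, integral_const_mul, integral_const_mul]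
    exacts [hX2w, hXw.const_mul _, hX2w.sub (hXw.const_mul _), hwi.const_mul _]
  nlinarith [mul_le_mul_of_nonneg_left hw_mass (sq_nonneg c)]

theorem sq_intervalIntegral_mul_le_intervalIntegral_sq_mul {f : ℝ → ℝ} {a b : ℝ}
    (hab : a ≤ b) (hf_nonneg : ∀ t, 0 ≤ f t)
    (hf : IntegrableOn f (Ioc a b)) (hf_mass : ∫ t in Ioc a b, f t ≤ 1) :
    (∫ t in a..b, t * f t) ^ 2 ≤ ∫ t in a..b, t ^ 2 * f t := by
  have hfi : IntervalIntegrable f volume a b :=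
    (intervalIntegrable_iff_integrableOn_Ioc_of_le hab).2 hf
  rw [intervalIntegral.integral_of_le hab, intervalIntegral.integral_of_le hab]
  exact sq_integral_mul_le_integral_sq_mul (ae_of_all _ hf_nonneg) hf_mass hf
    (hfi.continuousOn_mul continuousOn_id).1 (hfi.continuousOn_mul (continuousOn_pow 2)).1

theorem setIntegral_Ioi_mul_le_mul_setIntegral {f : ℝ → ℝ} {B x : ℝ}
    (hf_nonneg : ∀ t, 0 ≤ f t) (hB : ∀ᵐ t, B < t → f t = 0) (hx : 0 ≤ x)
    (hf : IntegrableOn f (Ioi x)) :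
    ∫ t in Ioi x, t * f t ≤ B * ∫ t in Ioi x, f t := by
  rw [← integral_const_mul]
  refine integral_mono_of_nonneg ?_ (hf.const_mul B) ?_
  · filter_upwards [self_mem_ae_restrict measurableSet_Ioi] with t ht
    exact mul_nonneg (hx.trans (le_of_lt ht)) (hf_nonneg t)
  · filter_upwards [ae_restrict_of_ae hB] with t ht
    rcases le_or_gt t B with htB | htB
    · exact mul_le_mul_of_nonneg_right htB (hf_nonneg t)
    · simp [ht htB]

theorem div_mem_Icc_of_eq_zero_or_le {a b c : ℝ} (ha : 0 ≤ a) (hc : 0 < c)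
    (hb : b = 0 ∨ c ≤ b) : a / b ∈ Icc 0 (a / c) := by
  rcases hb with rfl | hcb
  · simpa using div_nonneg ha hc.le
  · exact ⟨div_nonneg ha (hc.trans_le hcb).le, div_le_div_of_nonneg_left ha hc hcb⟩

theorem tendsto_one_sub_mul_nhdsWithin_Iio_one_div {m : ℝ} (hm : m ≠ 0) :
    Tendsto (fun lam => 1 - lam * m) (nhdsWithin (1/m) (Iio (1/m))) (nhds 0) := by
  have h : Tendsto (fun lam => 1 - lam * m) (nhds (1/m)) (nhds (1 - 1/m * m)) :=
    (continuous_const.sub (continuous_id.mul continuous_const)).tendsto _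
  rw [one_div_mul_cancel hm, sub_self] at h
  exact h.mono_left nhdsWithin_le_nhds

section Load

variable {f : ℝ → ℝ} {m lam x y : ℝ}

theorem rhoLe_eq_mul_sub (hm_int : IntegrableOn (fun t => t * f t) (Ioi 0))
    (hm_def : m = ∫ t in Ioi (0:ℝ), t * f t) (hx : 0 ≤ x) :
    rhoLe f lam x = lam * (m - ∫ t in Ioi x, t * f t) := by
  rw [rhoLe, hm_def, intervalIntegral.integral_Ioi_sub_Ioi hm_int hx]

theorem rhoLe_eq_of_le {B : ℝ} (hB : ∀ᵐ t, B < t → f t = 0)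
    (hm_int : IntegrableOn (fun t => t * f t) (Ioi 0))
    (hm_def : m = ∫ t in Ioi (0:ℝ), t * f t) (hB0 : 0 ≤ B) (hx : B ≤ x) :
    rhoLe f lam x = lam * m := by
  have htail : ∫ t in Ioi x, t * f t = 0 := by
    refine integral_eq_zero_of_ae ?_
    filter_upwards [ae_restrict_of_ae hB, self_mem_ae_restrict measurableSet_Ioi] with t ht hxt
    simp [ht (hx.trans_lt hxt)]
  rw [rhoLe_eq_mul_sub hm_int hm_def (hB0.trans hx), htail, sub_zero]

theorem rhoLe_le_mul (hf_nonneg : ∀ t, 0 ≤ f t)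
    (hm_int : IntegrableOn (fun t => t * f t) (Ioi 0))
    (hm_def : m = ∫ t in Ioi (0:ℝ), t * f t) (hlam : 0 ≤ lam) (hx : 0 ≤ x) :
    rhoLe f lam x ≤ lam * m := by
  have htail : 0 ≤ ∫ t in Ioi x, t * f t :=
    setIntegral_nonneg measurableSet_Ioi fun t ht =>
      mul_nonneg (hx.trans (le_of_lt ht)) (hf_nonneg t)
  rw [rhoLe_eq_mul_sub hm_int hm_def hx]
  exact mul_le_mul_of_nonneg_left (by linarith) hlam

theorem rhoLe_le_rhoLe (hf_nonneg : ∀ t, 0 ≤ f t)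
    (hm_int : IntegrableOn (fun t => t * f t) (Ioi 0)) (hlam : 0 ≤ lam)
    (hx : 0 ≤ x) (hxy : x ≤ y) : rhoLe f lam x ≤ rhoLe f lam y := by
  refine mul_le_mul_of_nonneg_left
    (intervalIntegral.integral_mono_interval le_rfl hx hxy ?_ ?_) hlam
  · filter_upwards [self_mem_ae_restrict measurableSet_Ioc] with t ht
    exact mul_nonneg ht.1.le (hf_nonneg t)
  · exact (intervalIntegrable_iff_integrableOn_Ioc_of_le (hx.trans hxy)).2
      (hm_int.mono_set Ioc_subset_Ioi_self)

theorem continuousOn_rhoLe (hm_int : IntegrableOn (fun t => t * f t) (Ioi 0)) (hx : 0 ≤ x) :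
    ContinuousOn (rhoLe f lam) (Icc 0 x) := by
  have h : IntegrableOn (fun t => t * f t) (uIcc 0 x) := by
    rw [uIcc_of_le hx, integrableOn_Icc_iff_integrableOn_Ioc (by simp)]
    exact hm_int.mono_set Ioc_subset_Ioi_self
  rw [← uIcc_of_le hx]
  exact continuousOn_const.mul (intervalIntegral.continuousOn_primitive_interval h)

theorem exists_rhoLe_eq {B r : ℝ} (hm_int : IntegrableOn (fun t => t * f t) (Ioi 0))
    (hm_def : m = ∫ t in Ioi (0:ℝ), t * f t) (hB0 : 0 ≤ B) (hB : ∀ᵐ t, B < t → f t = 0)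
    (hr : r ∈ Icc 0 (lam * m)) : ∃ a ∈ Icc 0 B, rhoLe f lam a = r := by
  refine intermediate_value_Icc hB0 (continuousOn_rhoLe hm_int hB0) ?_
  rwa [rhoLe_eq_of_le hB hm_int hm_def hB0 le_rfl, rhoLe, intervalIntegral.integral_same,
    mul_zero]

theorem mul_sub_rhoLe_le_mul_tailS {B : ℝ} (hf_nonneg : ∀ t, 0 ≤ f t)
    (hf_int : IntegrableOn f (Ioi 0)) (hm_int : IntegrableOn (fun t => t * f t) (Ioi 0))
    (hm_def : m = ∫ t in Ioi (0:ℝ), t * f t) (hB : ∀ᵐ t, B < t → f t = 0)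
    (hlam : 0 ≤ lam) (hx : 0 ≤ x) : lam * m - rhoLe f lam x ≤ lam * B * tailS f x := by
  have h := setIntegral_Ioi_mul_le_mul_setIntegral hf_nonneg hB hx
    (hf_int.mono_set (Ioi_subset_Ioi hx))
  rw [rhoLe_eq_mul_sub hm_int hm_def hx, tailS, mul_assoc]
  nlinarith [mul_le_mul_of_nonneg_left h hlam]

end Load

section Srpt

variable {f : ℝ → ℝ} {lam x : ℝ}

theorem Tsrpt1_nonneg (hf_nonneg : ∀ t, 0 ≤ f t) (hlam : 0 ≤ lam) (hx : 0 ≤ x)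
    (hρ : ∀ t ∈ Icc 0 x, rhoLe f lam t ≤ 1) : 0 ≤ Tsrpt1 f lam x := by
  have hsecond : 0 ≤ ∫ t in (0:ℝ)..x, t ^ 2 * f t :=
    intervalIntegral.integral_nonneg hx fun t _ => mul_nonneg (sq_nonneg t) (hf_nonneg t)
  have htail : 0 ≤ tailS f x := setIntegral_nonneg measurableSet_Ioi fun t _ => hf_nonneg t
  have hwait : 0 ≤ ∫ t in (0:ℝ)..x, 1 / (1 - rhoLe f lam t) :=
    intervalIntegral.integral_nonneg hx fun t ht => one_div_nonneg.2 (sub_nonneg.2 (hρ t ht))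
  unfold Tsrpt1
  positivity

theorem sq_rhoLe_div_le_Tsrpt1 (hf_nonneg : ∀ t, 0 ≤ f t) (hf_int : IntegrableOn f (Ioi 0))
    (hf_mass : ∫ t in Ioi (0:ℝ), f t ≤ 1) (hlam : 0 < lam) (hx : 0 ≤ x)
    (hρ : ∀ t ∈ Icc 0 x, rhoLe f lam t ≤ 1) :
    rhoLe f lam x ^ 2 / (2 * lam * (1 - rhoLe f lam x) ^ 2) ≤ Tsrpt1 f lam x := by
  have hjensen := sq_intervalIntegral_mul_le_intervalIntegral_sq_mul hx hf_nonneg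
    (hf_int.mono_set Ioc_subset_Ioi_self)
    ((setIntegral_mono_set hf_int (ae_of_all _ fun t => hf_nonneg t)
      Ioc_subset_Ioi_self.eventuallyLE).trans hf_mass)
  have htail : 0 ≤ tailS f x := setIntegral_nonneg measurableSet_Ioi fun t _ => hf_nonneg t
  have hwait : 0 ≤ ∫ t in (0:ℝ)..x, 1 / (1 - rhoLe f lam t) :=
    intervalIntegral.integral_nonneg hx fun t ht => one_div_nonneg.2 (sub_nonneg.2 (hρ t ht))
  have hsq : rhoLe f lam x ^ 2 / lam ≤ lam * ∫ t in (0:ℝ)..x, t ^ 2 * f t := by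
    rw [rhoLe, div_le_iff₀ hlam]
    nlinarith [mul_le_mul_of_nonneg_left hjensen (sq_nonneg lam)]
  calc rhoLe f lam x ^ 2 / (2 * lam * (1 - rhoLe f lam x) ^ 2)
      = rhoLe f lam x ^ 2 / lam / (2 * (1 - rhoLe f lam x) ^ 2) := by
        rw [div_div]; ring_nf
    _ ≤ (lam * (∫ t in (0:ℝ)..x, t ^ 2 * f t) + lam * x ^ 2 * tailS f x)
          / (2 * (1 - rhoLe f lam x) ^ 2) := by
        gcongr
        nlinarith [mul_nonneg (mul_nonneg hlam.le (sq_nonneg x)) htail]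
    _ ≤ Tsrpt1 f lam x := le_add_of_nonneg_right hwait

theorem TsrptMean_eq_zero_or_mul_tailS_le {a c : ℝ} (hf_nonneg : ∀ t, 0 ≤ f t)
    (hf_int : IntegrableOn f (Ioi 0)) (ha : 0 ≤ a)
    (hT_nonneg : ∀ x, 0 < x → 0 ≤ Tsrpt1 f lam x)
    (hT : ∀ x, a < x → c ≤ Tsrpt1 f lam x) :
    TsrptMean f lam = 0 ∨ c * tailS f a ≤ TsrptMean f lam := by
  by_cases hint : IntegrableOn (fun x => Tsrpt1 f lam x * f x) (Ioi 0)
  · right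
    have hsub : Ioi a ⊆ Ioi 0 := Ioi_subset_Ioi ha
    calc c * tailS f a = ∫ x in Ioi a, c * f x := (integral_const_mul c _).symm
      _ ≤ ∫ x in Ioi a, Tsrpt1 f lam x * f x :=
        setIntegral_mono_on ((hf_int.mono_set hsub).const_mul c) (hint.mono_set hsub)
          measurableSet_Ioi fun x hx => mul_le_mul_of_nonneg_right (hT x hx) (hf_nonneg x)
      _ ≤ TsrptMean f lam := by
        refine setIntegral_mono_set hint ?_ hsub.eventuallyLE
        filter_upwards [self_mem_ae_restrict measurableSet_Ioi] with x hx
        exact mul_nonneg (hT_nonneg x hx) (hf_nonneg x)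
  · exact Or.inl (integral_undef hint)

end Srpt

theorem TsrptMean_eq_zero_or_ge_of_bounded {f : ℝ → ℝ} {m lam B : ℝ}
    (hf_nonneg : ∀ t, 0 ≤ f t) (hf_int : IntegrableOn f (Ioi 0))
    (hf_mass : ∫ t in Ioi (0:ℝ), f t ≤ 1) (hm_int : IntegrableOn (fun t => t * f t) (Ioi 0))
    (hm_def : m = ∫ t in Ioi (0:ℝ), t * f t) (hBpos : 0 < B) (hB : ∀ᵐ t, B < t → f t = 0)
    (hlam : 0 < lam) (hε : 0 < 1 - lam * m) (hε' : 1 - lam * m ≤ 1 / 4) :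
    TsrptMean f lam = 0 ∨ m ^ 2 / (32 * B * (1 - lam * m)) ≤ TsrptMean f lam := by
  set ε := 1 - lam * m with hε_def
  have hρ_le : ∀ x, 0 ≤ x → rhoLe f lam x ≤ 1 - ε := fun x hx => by
    rw [hε_def, sub_sub_cancel]; exact rhoLe_le_mul hf_nonneg hm_int hm_def hlam.le hx
  obtain ⟨a, ha, hρa⟩ : ∃ a ∈ Icc 0 B, rhoLe f lam a = 1 - 2 * ε :=
    exists_rhoLe_eq hm_int hm_def hBpos.le hB ⟨by linarith, by linarith⟩
  have htail : ε / (lam * B) ≤ tailS f a := by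
    rw [div_le_iff₀ (by positivity)]
    linarith [mul_sub_rhoLe_le_mul_tailS hf_nonneg hf_int hm_int hm_def hB hlam.le ha.1]
  have hT : ∀ x, a < x → 1 / (32 * lam * ε ^ 2) ≤ Tsrpt1 f lam x := fun x hx => by
    have hx0 : 0 ≤ x := ha.1.trans hx.le
    have hρx : 1 - 2 * ε ≤ rhoLe f lam x :=
      hρa ▸ rhoLe_le_rhoLe hf_nonneg hm_int hlam.le ha.1 hx.le
    have hgap : 0 < 1 - rhoLe f lam x := by linarith [hρ_le x hx0]
    calc 1 / (32 * lam * ε ^ 2) = (1 / 2) ^ 2 / (2 * lam * (2 * ε) ^ 2) := by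
          field_simp; ring
      _ ≤ rhoLe f lam x ^ 2 / (2 * lam * (1 - rhoLe f lam x) ^ 2) := by
          gcongr <;> linarith
      _ ≤ Tsrpt1 f lam x := sq_rhoLe_div_le_Tsrpt1 hf_nonneg hf_int hf_mass hlam hx0
          fun t ht => (hρ_le t ht.1).trans (by linarith)
  have hT_nonneg : ∀ x, 0 < x → 0 ≤ Tsrpt1 f lam x := fun x hx =>
    Tsrpt1_nonneg hf_nonneg hlam.le hx.le fun t ht => (hρ_le t ht.1).trans (by linarith)
  refine (TsrptMean_eq_zero_or_mul_tailS_le hf_nonneg hf_int ha.1 hT_nonneg hT).imp_right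
    fun h => le_trans ?_ ((mul_le_mul_of_nonneg_left htail (by positivity)).trans h)
  have hlm : (lam * m) ^ 2 ≤ 1 := by nlinarith
  rw [div_mul_div_comm, div_le_div_iff₀ (by positivity) (by positivity)]
  nlinarith [mul_le_mul_of_nonneg_left hlm (by positivity : (0:ℝ) ≤ 32 * B * ε * ε)]

theorem log_one_div_div_TsrptMean_mem_Icc {f : ℝ → ℝ} {m lam B : ℝ}
    (hf_nonneg : ∀ t, 0 ≤ f t) (hf_int : IntegrableOn f (Ioi 0))
    (hf_mass : ∫ t in Ioi (0:ℝ), f t ≤ 1) (hm_int : IntegrableOn (fun t => t * f t) (Ioi 0))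
    (hm_def : m = ∫ t in Ioi (0:ℝ), t * f t) (hm_pos : 0 < m) (hBpos : 0 < B)
    (hB : ∀ᵐ t, B < t → f t = 0) (hlam : 0 < lam) (hε : 0 < 1 - lam * m)
    (hε' : 1 - lam * m ≤ 1 / 4) :
    Real.log (1 / (1 - lam * m)) / TsrptMean f lam
      ∈ Icc 0 (32 * B / m ^ 2 * Real.negMulLog (1 - lam * m)) := by
  have hlog : 0 ≤ Real.log (1 / (1 - lam * m)) :=
    Real.log_nonneg ((one_le_div hε).2 (by linarith))
  have hid : Real.log (1 / (1 - lam * m)) / (m ^ 2 / (32 * B * (1 - lam * m)))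
      = 32 * B / m ^ 2 * Real.negMulLog (1 - lam * m) := by
    rw [Real.negMulLog, one_div, Real.log_inv]
    field_simp
  rw [← hid]
  exact div_mem_Icc_of_eq_zero_or_le hlog (by positivity)
    (TsrptMean_eq_zero_or_ge_of_bounded hf_nonneg hf_int hf_mass hm_int hm_def hBpos hB
      hlam hε hε')

theorem log_over_Tsrpt1_tendsto_zero_bounded_general
    (f : ℝ → ℝ) (m : ℝ)
    (hf_nonneg : ∀ x, 0 ≤ f x)
    (hf_prob : ∫ t in Set.Ioi (0:ℝ), f t = 1)
    (hm_int : Integrable (fun t => t * f t) (volume.restrict (Set.Ioi 0)))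
    (hm_def : m = ∫ t in Set.Ioi (0:ℝ), t * f t)
    (hm_pos : 0 < m)
    (hbounded : ∃ B > (0:ℝ), ∀ᵐ x : ℝ, B < x → f x = 0) :
    Tendsto (fun lam => Real.log (1 / (1 - lam * m)) / TsrptMean f lam)
      (nhdsWithin (1/m) (Set.Iio (1/m))) (nhds 0) := by
  obtain ⟨B, hBpos, hB⟩ := hbounded
  have hf_int : IntegrableOn f (Ioi 0) := .of_integral_ne_zero (by simp [hf_prob])
  have hε := tendsto_one_sub_mul_nhdsWithin_Iio_one_div hm_pos.ne'
  have hbound : ∀ᶠ lam in nhdsWithin (1/m) (Iio (1/m)),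
      Real.log (1 / (1 - lam * m)) / TsrptMean f lam
        ∈ Icc 0 (32 * B / m ^ 2 * Real.negMulLog (1 - lam * m)) := by
    filter_upwards [self_mem_nhdsWithin,
      hε.eventually (eventually_le_nhds (by norm_num : (0:ℝ) < 1 / 4)),
      (lt_mem_nhds (one_div_pos.2 hm_pos)).filter_mono nhdsWithin_le_nhds]
      with lam hlam hε' hlam0
    rw [mem_Iio, lt_div_iff₀ hm_pos] at hlam
    exact log_one_div_div_TsrptMean_mem_Icc hf_nonneg hf_int hf_prob.le hm_int hm_def hm_pos
      hBpos hB hlam0 (by linarith) hε'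
  have hlim : Tendsto (fun lam => 32 * B / m ^ 2 * Real.negMulLog (1 - lam * m))
      (nhdsWithin (1/m) (Iio (1/m))) (nhds 0) := by
    simpa using ((Real.continuous_negMulLog.tendsto 0).comp hε).const_mul (32 * B / m ^ 2)
  exact squeeze_zero' (hbound.mono fun _ h => h.1) (hbound.mono fun _ h => h.2) hlim

/-- **Lemma 6.2, bounded case.** If `S` is bounded, then
`lim_{λ → (1/m)⁻} ln(1/(1−λm)) / T̄(λ) = 0`. -/
theorem log_over_Tsrpt1_tendsto_zero_bounded
    (f : ℝ → ℝ) (m : ℝ)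
    (hf_meas : Measurable f)
    (hf_nonneg : ∀ x, 0 ≤ f x)
    (hf_zero : ∀ x ≤ 0, f x = 0)
    (hf_prob : ∫ t in Set.Ioi (0:ℝ), f t = 1)
    (hm_int : Integrable (fun t => t * f t) (volume.restrict (Set.Ioi 0)))
    (hm_def : m = ∫ t in Set.Ioi (0:ℝ), t * f t)
    (hm_pos : 0 < m)
    (hbounded : ∃ B > (0:ℝ), ∀ᵐ x : ℝ, B < x → f x = 0) :
    Tendsto (fun lam => Real.log (1 / (1 - lam * m)) / TsrptMean f lam)
      (nhdsWithin (1/m) (Set.Iio (1/m))) (nhds 0) :=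
  log_over_Tsrpt1_tendsto_zero_bounded_general f m hf_nonneg hf_prob hm_int hm_def hm_pos hbounded
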